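/- The hyperspace CL(S_ω) with the Fell topology is not Fréchet–Urysohn, where S_ω is the countable sequential fan. -/

import Mathlib

/-!
Let `x` be the apex of the fan and `B_g = {x_i(n) : i < g n}` for `g : ℕ → ℕ`; each `B_g` is
closed. In the Fell topology `{x}` lies in the closure of the sets `B_g`: a compact set missing
`x` is a finite set of isolated points, and a neighbourhood of `x` contains a tail
`{x_i(n) : i > f n}`. But no sequence `B_{g_j}` converges to `{x}`: missing each compact point
`x_0(n)` forces `g_j n = 0` for large `j`, so some `f` bounds every `g_j`, and then no `B_{g_j}`
hits the neighbourhood `{x} ∪ {x_i(n) : i > f n}` of `x`.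
-/

open Set Filter Topology

/-- `CL X`: the nonempty closed subsets of `X`. -/
abbrev CL (X : Type*) [TopologicalSpace X] := {A : Set X // A.Nonempty ∧ IsClosed A}

/-- An `ω^ω`-base of neighborhoods at a point `y` of a space with topology `t`:
a neighborhood base `{U_α : α ∈ ω^ω}` with `U_β ⊆ U_α` whenever `α ≤ β` pointwise. -/
def HasOmegaOmegaBaseAt {Y : Type*} (t : TopologicalSpace Y) (y : Y) : Prop :=
  ∃ U : (ℕ → ℕ) → Set Y, (∀ α, U α ∈ @nhds Y t y) ∧
    (∀ α β : ℕ → ℕ, α ≤ β → U β ⊆ U α) ∧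
    ∀ V ∈ @nhds Y t y, ∃ α, U α ⊆ V

/-- The Vietoris topology on `CL X`, generated by the sets `U⁺` and `U⁻` for `U` open. -/
def vietoris (X : Type*) [TopologicalSpace X] : TopologicalSpace (CL X) :=
  TopologicalSpace.generateFrom
    ({S | ∃ U : Set X, IsOpen U ∧ S = {A : CL X | (A : Set X) ⊆ U}} ∪
     {S | ∃ U : Set X, IsOpen U ∧ S = {A : CL X | ((A : Set X) ∩ U).Nonempty}})

/-- The Fell topology on `CL X`, generated by the sets `U⁻` for `U` open and
`(Kᶜ)⁺` for `K` compact. -/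
def fell (X : Type*) [TopologicalSpace X] : TopologicalSpace (CL X) :=
  TopologicalSpace.generateFrom
    ({S | ∃ U : Set X, IsOpen U ∧ S = {A : CL X | ((A : Set X) ∩ U).Nonempty}} ∪
     {S | ∃ K : Set X, IsCompact K ∧ S = {A : CL X | (A : Set X) ⊆ Kᶜ}})

/-- The sequential fan `S_ω`: `none` is the point `x`, and `some (n, i)` is the point
`x_i(n)` of the `n`-th convergent sequence. -/
def SeqFan := Option (ℕ × ℕ)

/-- Topology of `S_ω`: all points `x_i(n)` are isolated and the basic neighborhoods of `x`
are the sets `{x} ∪ {x_i(n) : i > f(n), n ∈ ω}` for `f ∈ ω^ω`. -/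
instance : TopologicalSpace SeqFan :=
  TopologicalSpace.generateFrom
    ({S | ∃ p : ℕ × ℕ, S = {Option.some p}} ∪
     {S | ∃ f : ℕ → ℕ, S = insert Option.none
        {q : SeqFan | ∃ n i : ℕ, f n < i ∧ q = Option.some (n, i)}})

attribute [local instance] fell

theorem tendsto_fell_iff {X ι : Type*} [TopologicalSpace X] {l : Filter ι} {u : ι → CL X}
    {A : CL X} :
    Tendsto u l (𝓝 A) ↔
      (∀ U, IsOpen U → ((A : Set X) ∩ U).Nonempty → ∀ᶠ i in l, ((u i : Set X) ∩ U).Nonempty) ∧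
      ∀ K, IsCompact K → (A : Set X) ⊆ Kᶜ → ∀ᶠ i in l, (u i : Set X) ⊆ Kᶜ := by
  unfold fell
  rw [TopologicalSpace.nhds_generateFrom]
  simp only [tendsto_iInf, tendsto_principal]
  constructor
  · intro h
    exact ⟨fun U hU hA => h _ ⟨hA, Or.inl ⟨U, hU, rfl⟩⟩,
      fun K hK hA => h _ ⟨hA, Or.inr ⟨K, hK, rfl⟩⟩⟩
  · rintro ⟨hit, miss⟩ S ⟨hAS, ⟨U, hU, rfl⟩ | ⟨K, hK, rfl⟩⟩
    exacts [hit U hU hAS, miss K hK hAS]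

namespace SeqFan

def tail (f : ℕ → ℕ) : Set SeqFan :=
  insert none {q : SeqFan | ∃ n i : ℕ, f n < i ∧ q = some (n, i)}

def below (g : ℕ → ℕ) : Set SeqFan := {q | ∃ n i : ℕ, i < g n ∧ q = some (n, i)}

theorem isOpen_tail (f : ℕ → ℕ) : IsOpen (tail f) :=
  TopologicalSpace.isOpen_generateFrom_of_mem (Or.inr ⟨f, rfl⟩)

theorem isOpen_singleton_some (p : ℕ × ℕ) : IsOpen ({(some p : SeqFan)} : Set SeqFan) :=
  TopologicalSpace.isOpen_generateFrom_of_mem (Or.inl ⟨p, rfl⟩)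

theorem tail_anti : Antitone tail := by
  rintro f g h q (rfl | ⟨n, i, hi, rfl⟩)
  exacts [mem_insert _ _, mem_insert_of_mem _ ⟨n, i, (h n).trans_lt hi, rfl⟩]

theorem none_mem_tail (f : ℕ → ℕ) : (none : SeqFan) ∈ tail f := mem_insert _ _

theorem some_mem_tail {f : ℕ → ℕ} {n i : ℕ} : (some (n, i) : SeqFan) ∈ tail f ↔ f n < i := by
  show (_ = none ∨ ∃ n' i', f n' < i' ∧ some (n, i) = some (n', i')) ↔ _
  simp

theorem some_mem_below {g : ℕ → ℕ} {n i : ℕ} : (some (n, i) : SeqFan) ∈ below g ↔ i < g n := by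
  show (∃ n' i', i' < g n' ∧ some (n, i) = some (n', i')) ↔ _
  simp

theorem disjoint_below_tail {f g : ℕ → ℕ} (h : g ≤ f) : Disjoint (below g) (tail f) := by
  rw [Set.disjoint_left]
  rintro _ ⟨n, i, hi, rfl⟩
  exact fun hi' => (some_mem_tail.1 hi').not_ge (hi.le.trans (h n))

theorem isClosed_below (g : ℕ → ℕ) : IsClosed (below g) := by
  rw [← isOpen_compl_iff, isOpen_iff_forall_mem_open]
  rintro (_ | p) hq
  · exact ⟨tail g, (disjoint_below_tail le_rfl).subset_compl_left, isOpen_tail g,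
      none_mem_tail g⟩
  · exact ⟨{some p}, singleton_subset_iff.2 hq, isOpen_singleton_some p, rfl⟩

theorem isClosed_singleton_none : IsClosed ({(none : SeqFan)} : Set SeqFan) := by
  rw [← isOpen_compl_iff, isOpen_iff_forall_mem_open]
  rintro (_ | p) hq
  · exact absurd rfl hq
  · exact ⟨{some p}, singleton_subset_iff.2 hq, isOpen_singleton_some p, rfl⟩

theorem exists_tail_subset {U : Set SeqFan} (hU : IsOpen U) (hx : none ∈ U) :
    ∃ f, tail f ⊆ U := by
  induction hU with
  | basic S hS =>
    rcases hS with ⟨p, rfl⟩ | ⟨f, rfl⟩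
    · exact absurd hx nofun
    · exact ⟨f, subset_rfl⟩
  | univ => exact ⟨0, subset_univ _⟩
  | inter S T _ _ ihS ihT =>
    obtain ⟨f, hf⟩ := ihS hx.1
    obtain ⟨g, hg⟩ := ihT hx.2
    exact ⟨f ⊔ g, subset_inter ((tail_anti le_sup_left).trans hf)
      ((tail_anti le_sup_right).trans hg)⟩
  | sUnion 𝒮 _ ih =>
    obtain ⟨S, hS, hxS⟩ := hx
    obtain ⟨f, hf⟩ := ih S hS hxS
    exact ⟨f, hf.trans (subset_sUnion_of_mem hS)⟩

theorem finite_of_isCompact_of_none_notMem {K : Set SeqFan} (hK : IsCompact K)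
    (hx : none ∉ K) : K.Finite := by
  obtain ⟨t, ht⟩ := hK.elim_finite_subcover (fun p : ℕ × ℕ => {some p})
    isOpen_singleton_some fun q hq => by
      rcases q with _ | p
      exacts [absurd hq hx, mem_iUnion.2 ⟨p, rfl⟩]
  refine (t.finite_toSet.image some).subset fun q hq => ?_
  obtain ⟨p, hp, rfl⟩ := mem_iUnion₂.1 (ht hq)
  exact mem_image_of_mem some hp

def fanPoint : CL SeqFan := ⟨{none}, singleton_nonempty _, isClosed_singleton_none⟩

/-- The sets `below (approxHeight m f)` avoid the first `m` sequences, hence eventually every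
compact set missing `x`, and rise above `f` in all later ones, hence eventually meet every
neighbourhood of `x`. -/
def approxHeight (m : ℕ) (f : ℕ → ℕ) (n : ℕ) : ℕ := if n < m then 0 else f n + 1

def approx (p : ℕ × (ℕ → ℕ)) : CL SeqFan :=
  ⟨below (approxHeight p.1 p.2), ⟨some (p.1, 0), some_mem_below.2 (by simp [approxHeight])⟩,
    isClosed_below _⟩

theorem tendsto_approx_fanPoint : Tendsto approx (atTop ×ˢ atTop) (𝓝 fanPoint) := by
  rw [tendsto_fell_iff]
  constructor
  · rintro U hU ⟨_, rfl, hxU⟩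
    obtain ⟨f₀, hf₀⟩ := exists_tail_subset hU hxU
    filter_upwards [(eventually_ge_atTop (f₀ + 1)).prod_inr atTop]
    rintro ⟨m, f⟩ hf
    exact ⟨some (m, f m), some_mem_below.2 (by simp [approxHeight]),
      hf₀ (some_mem_tail.2 (hf m))⟩
  · intro K hK hxK
    have hK' := finite_of_isCompact_of_none_notMem hK (hxK rfl)
    obtain ⟨m₀, hm₀⟩ := (hK'.image fun q => (q.getD (0, 0)).1).bddAbove
    filter_upwards [(eventually_gt_atTop m₀).prod_inl atTop]
    rintro ⟨m, f⟩ hm _ ⟨n, i, hi, rfl⟩ hqK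
    have hn : n < m := (hm₀ ⟨_, hqK, rfl⟩).trans_lt hm
    simp [approxHeight, hn] at hi

theorem fanPoint_mem_closure_below :
    fanPoint ∈ closure {B : CL SeqFan | ∃ g, (B : Set SeqFan) = below g} :=
  mem_closure_of_tendsto tendsto_approx_fanPoint (univ_mem' fun _ => ⟨_, rfl⟩)

theorem not_tendsto_fanPoint {u : ℕ → CL SeqFan} {g : ℕ → ℕ → ℕ}
    (hg : ∀ j, (u j : Set SeqFan) = below (g j)) : ¬ Tendsto u atTop (𝓝 fanPoint) := by
  rw [tendsto_fell_iff]
  rintro ⟨hit, miss⟩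
  have vanish (n : ℕ) : ∀ᶠ j in atTop, g j n = 0 := by
    filter_upwards [miss {some (n, 0)} isCompact_singleton (by rintro _ rfl ⟨⟩)] with j hj
    by_contra hne
    exact hj (hg j ▸ some_mem_below.2 (Nat.pos_of_ne_zero hne)) rfl
  choose f hf using fun n =>
    ((tendsto_pure.2 (vanish n)).mono_right (pure_le_nhds 0)).bddAbove_range
  obtain ⟨j, hj⟩ := (hit (tail f) (isOpen_tail f) ⟨none, rfl, none_mem_tail f⟩).exists
  rw [hg j, ← not_disjoint_iff_nonempty_inter] at hj
  exact hj (disjoint_below_tail fun n => hf n ⟨j, rfl⟩)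

end SeqFan

open SeqFan in
/-- `(CL(S_ω), τ_F)` is not Fréchet–Urysohn. -/
theorem hyperspace_fell_seqFan_not_frechetUrysohn :
    ¬ @FrechetUrysohnSpace (CL SeqFan) (fell SeqFan) := by
  intro _
  obtain ⟨u, hu, hlim⟩ := mem_closure_iff_seq_limit.1 fanPoint_mem_closure_below
  choose g hg using hu
  exact not_tendsto_fanPoint hg hlim
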